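/- For the second-kind half-line quantum walk with coin parameters γ_j = 1/(r+j) (j ≥ 1) and off-diagonal coin at the origin, the bottom localization degenerates to the rightmost site: lim_{n→∞} μ_n(n) = r/(r+1), and for every fixed j ≥ 1, lim_{n→∞} μ_n(n−j) = 0. -/

import Mathlib

open Filter Topology Matrix

/-- Coin parameter `γ_j = 1/(r+j)`. -/
noncomputable def gam (r : ℝ) (j : ℕ) : ℝ := 1 / (r + j)

/-- `ρ_j = √(1 - γ_j²)`. -/
noncomputable def rho (r : ℝ) (j : ℕ) : ℝ := Real.sqrt (1 - gam r j ^ 2)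

/-- `P_j = [[ρ_j, γ_j], [0, 0]]` (used for `j ≥ 1`). -/
noncomputable def Pmat (r : ℝ) (j : ℕ) : Matrix (Fin 2) (Fin 2) ℂ :=
  !![(rho r j : ℂ), (gam r j : ℂ); 0, 0]

/-- `Q_j = [[0, 0], [−γ_j, ρ_j]]` for `j ≥ 1`, and the off-diagonal-coin value
`Q_0 = [[0, 0], [1, 0]]` at the origin. -/
noncomputable def Qmat (r : ℝ) : ℕ → Matrix (Fin 2) (Fin 2) ℂ
  | 0 => !![0, 0; 1, 0]
  | j + 1 => !![0, 0; (-(gam r (j + 1)) : ℂ), (rho r (j + 1) : ℂ)]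

/-- Weight matrices `Ξ_n(j)` of the second-kind half-line quantum walk with
coin parameters `γ_j = 1/(r+j)` (`j ≥ 1`) and off-diagonal coin at the origin. -/
noncomputable def Xi (r : ℝ) : ℕ → ℕ → Matrix (Fin 2) (Fin 2) ℂ
  | 0, 0 => 1
  | 0, _ + 1 => 0
  | n + 1, 0 => Pmat r 1 * Xi r n 1
  | n + 1, j + 1 => Pmat r (j + 2) * Xi r n (j + 2) + Qmat r j * Xi r n j

/-- Position distribution `μ_n(j) = ‖Ξ_n(j) φ_0‖²` for the initial coin state
`φ_0 = (1, 0)` (squared Euclidean norm of `ℂ²`). -/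
noncomputable def mu (r : ℝ) (n j : ℕ) : ℝ :=
  ‖(Xi r n j).mulVec ![1, 0] 0‖ ^ 2
    + ‖(Xi r n j).mulVec ![1, 0] 1‖ ^ 2

/-!
Write `C_m = ρ_1 ⋯ ρ_m` and `a_m = γ_{m+1} C_m`. By induction on `n`, `Ξ_n(j) φ_0` vanishes
unless `j ≡ n (mod 2)`, equals `(0, C_{n-1})` at the front `j = n ≥ 1`, and behind the front
equals `(a_j, a_{j-1})` (with `a_{-1} = 0`) independently of `n`. The profile is stationary
because `(a_m, a_{m+1})` is fixed by the local reflection `[[γ, ρ], [ρ, -γ]]`, which is where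
`γ_j = 1/(r+j)` enters. Since `∏ (1 - γ_i²)` telescopes,
`μ_n(n) = C_{n-1}² = r/(r+1) · (1 + γ_{n-1}) → r/(r+1)`, while
`μ_n(n-j) ≤ a_{n-j}² + a_{n-j-1}² → 0` because `γ_m → 0` and `C_m²` converges.
-/

section

variable {r : ℝ}

lemma gam_pos (hr : 0 < r) (m : ℕ) : 0 < gam r m := by
  unfold gam; positivity

lemma tendsto_gam : Tendsto (gam r) atTop (𝓝 0) := by
  unfold gam
  simp only [one_div]
  exact (tendsto_atTop_add_const_left _ r tendsto_natCast_atTop_atTop).inv_tendsto_atTop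

lemma gam_succ_mul_one_add_gam (hr : 0 < r) (m : ℕ) :
    gam r (m + 1) * (1 + gam r m) = gam r m := by
  have : 0 < r + m := by positivity
  unfold gam
  push_cast
  field_simp
  ring

lemma rho_succ_sq (hr : 0 < r) (m : ℕ) : rho r (m + 1) ^ 2 = 1 - gam r (m + 1) ^ 2 := by
  have hle : gam r (m + 1) ≤ 1 := by
    unfold gam
    rw [div_le_one (by positivity)]
    push_cast
    linarith [(Nat.cast_nonneg m : (0 : ℝ) ≤ m)]
  exact Real.sq_sqrt (by nlinarith [gam_pos hr (m + 1)])

noncomputable def rhoProd (r : ℝ) : ℕ → ℝ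
  | 0 => 1
  | m + 1 => rhoProd r m * rho r (m + 1)

lemma rhoProd_sq (hr : 0 < r) (m : ℕ) :
    rhoProd r m ^ 2 = r / (r + 1) * (1 + gam r m) := by
  induction m with
  | zero =>
    simp only [rhoProd, gam, Nat.cast_zero, add_zero]
    field_simp
  | succ m ih =>
    rw [rhoProd, mul_pow, ih, rho_succ_sq hr]
    linear_combination -(r / (r + 1) * (1 + gam r (m + 1))) * gam_succ_mul_one_add_gam hr m

lemma tendsto_rhoProd_sq (hr : 0 < r) :
    Tendsto (fun m => rhoProd r m ^ 2) atTop (𝓝 (r / (r + 1))) := by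
  have h := (tendsto_gam (r := r)).const_add 1 |>.const_mul (r / (r + 1))
  rw [add_zero, mul_one] at h
  simpa only [rhoProd_sq hr] using h

noncomputable def amp (r : ℝ) (m : ℕ) : ℝ := gam r (m + 1) * rhoProd r m

lemma tendsto_amp_sq (hr : 0 < r) : Tendsto (fun m => amp r m ^ 2) atTop (𝓝 0) := by
  have hg := (tendsto_gam (r := r)).comp (tendsto_add_atTop_nat 1)
  have h := (hg.pow 2).mul (tendsto_rhoProd_sq hr)
  simp only [zero_pow two_ne_zero, zero_mul] at h
  simpa only [amp, mul_pow, Function.comp_apply] using h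

lemma rho_mul_amp_succ_add_gam_mul_amp (hr : 0 < r) (m : ℕ) :
    rho r (m + 1) * amp r (m + 1) + gam r (m + 1) * amp r m = amp r m := by
  unfold amp
  rw [rhoProd]
  linear_combination rhoProd r m * (gam r (m + 2) * rho_succ_sq hr m
    + (1 - gam r (m + 1)) * gam_succ_mul_one_add_gam hr (m + 1))

lemma neg_gam_mul_amp_succ_add_rho_mul_amp (hr : 0 < r) (m : ℕ) :
    -gam r (m + 1) * amp r (m + 1) + rho r (m + 1) * amp r m = amp r (m + 1) := by
  unfold amp
  rw [rhoProd]
  linear_combination -(rhoProd r m * rho r (m + 1)) * gam_succ_mul_one_add_gam hr (m + 1)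

noncomputable def vec2 (x y : ℝ) : Fin 2 → ℂ := ![(x : ℂ), (y : ℂ)]

lemma vec2_zero : vec2 0 0 = 0 := by
  ext i; fin_cases i <;> simp [vec2]

lemma vec2_add (a b c d : ℝ) : vec2 a b + vec2 c d = vec2 (a + c) (b + d) := by
  ext i; fin_cases i <;> simp [vec2]

lemma Pmat_mulVec_vec2 (j : ℕ) (x y : ℝ) :
    (Pmat r j).mulVec (vec2 x y) = vec2 (rho r j * x + gam r j * y) 0 := by
  ext i; fin_cases i <;> simp [vec2, Pmat, Matrix.mulVec, dotProduct]

lemma Qmat_zero_mulVec_vec2 (x y : ℝ) : (Qmat r 0).mulVec (vec2 x y) = vec2 0 x := by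
  ext i; fin_cases i <;> simp [vec2, Qmat, Matrix.mulVec, dotProduct]

lemma Qmat_succ_mulVec_vec2 (j : ℕ) (x y : ℝ) :
    (Qmat r (j + 1)).mulVec (vec2 x y) = vec2 0 (-gam r (j + 1) * x + rho r (j + 1) * y) := by
  ext i; fin_cases i <;> simp [vec2, Qmat, Matrix.mulVec, dotProduct]

noncomputable def frontVec (r : ℝ) : ℕ → Fin 2 → ℂ
  | 0 => vec2 1 0
  | m + 1 => vec2 0 (rhoProd r m)

noncomputable def stationaryVec (r : ℝ) : ℕ → Fin 2 → ℂ
  | 0 => vec2 (amp r 0) 0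
  | m + 1 => vec2 (amp r (m + 1)) (amp r m)

lemma Qmat_mulVec_frontVec (n : ℕ) : (Qmat r n).mulVec (frontVec r n) = frontVec r (n + 1) := by
  cases n with
  | zero => simp only [frontVec, Qmat_zero_mulVec_vec2, rhoProd]
  | succ m =>
    simp only [frontVec, Qmat_succ_mulVec_vec2, rhoProd]
    ring_nf

lemma Pmat_mulVec_frontVec (m : ℕ) :
    (Pmat r (m + 1)).mulVec (frontVec r (m + 1)) = vec2 (amp r m) 0 := by
  simp only [frontVec, Pmat_mulVec_vec2, amp]
  ring_nf

lemma Pmat_mulVec_stationaryVec (hr : 0 < r) (m : ℕ) :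
    (Pmat r (m + 1)).mulVec (stationaryVec r (m + 1)) = vec2 (amp r m) 0 := by
  rw [stationaryVec, Pmat_mulVec_vec2, rho_mul_amp_succ_add_gam_mul_amp hr]

lemma Qmat_mulVec_stationaryVec (hr : 0 < r) (m : ℕ) :
    (Qmat r m).mulVec (stationaryVec r m) = vec2 0 (amp r m) := by
  cases m with
  | zero => rw [stationaryVec, Qmat_zero_mulVec_vec2]
  | succ m => rw [stationaryVec, Qmat_succ_mulVec_vec2, neg_gam_mul_amp_succ_add_rho_mul_amp hr]

noncomputable def walkVec (r : ℝ) (n j : ℕ) : Fin 2 → ℂ := (Xi r n j).mulVec ![1, 0]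

lemma Xi_eq_zero_of_lt {n j : ℕ} (h : n < j) : Xi r n j = 0 := by
  induction n generalizing j with
  | zero => obtain ⟨k, rfl⟩ := Nat.exists_eq_add_of_lt h; rfl
  | succ n ih =>
    obtain ⟨k, rfl⟩ : ∃ k, j = k + 1 := ⟨j - 1, by omega⟩
    rw [Xi, ih (by omega), ih (by omega), mul_zero, mul_zero, add_zero]

lemma walkVec_eq_zero_of_lt {n j : ℕ} (h : n < j) : walkVec r n j = 0 := by
  rw [walkVec, Xi_eq_zero_of_lt h, Matrix.zero_mulVec]

lemma walkVec_zero_zero : walkVec r 0 0 = frontVec r 0 := by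
  ext i; fin_cases i <;> simp [walkVec, Xi, frontVec, vec2]

lemma walkVec_succ_zero (n : ℕ) :
    walkVec r (n + 1) 0 = (Pmat r 1).mulVec (walkVec r n 1) := by
  rw [walkVec, walkVec, Xi, Matrix.mulVec_mulVec]

lemma walkVec_succ_succ (n j : ℕ) :
    walkVec r (n + 1) (j + 1) =
      (Pmat r (j + 2)).mulVec (walkVec r n (j + 2)) + (Qmat r j).mulVec (walkVec r n j) := by
  simp only [walkVec, Xi, Matrix.add_mulVec, Matrix.mulVec_mulVec]

lemma mu_eq_of_walkVec_eq {n j : ℕ} {x y : ℝ} (h : walkVec r n j = vec2 x y) :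
    mu r n j = x ^ 2 + y ^ 2 := by
  have h0 := congrFun h 0
  have h1 := congrFun h 1
  simp only [walkVec, vec2] at h0 h1
  simp [mu, h0, h1, Complex.norm_real, sq_abs]

lemma mu_nonneg (n j : ℕ) : 0 ≤ mu r n j := by
  unfold mu; positivity

structure WalkProfile (r : ℝ) (n : ℕ) : Prop where
  parity : ∀ j, j % 2 ≠ n % 2 → walkVec r n j = 0
  front : walkVec r n n = frontVec r n
  behind : ∀ j < n, j % 2 = n % 2 → walkVec r n j = stationaryVec r j

namespace WalkProfile

variable {n : ℕ}

lemma zero : WalkProfile r 0 where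
  parity j hj := walkVec_eq_zero_of_lt (by omega)
  front := walkVec_zero_zero
  behind j hj := by omega

lemma parity_succ (h : WalkProfile r n) (j : ℕ) (hj : j % 2 ≠ (n + 1) % 2) :
    walkVec r (n + 1) j = 0 := by
  cases j with
  | zero => rw [walkVec_succ_zero, h.parity 1 (by omega), Matrix.mulVec_zero]
  | succ k =>
    rw [walkVec_succ_succ, h.parity (k + 2) (by omega), h.parity k (by omega),
      Matrix.mulVec_zero, Matrix.mulVec_zero, add_zero]

lemma front_succ (h : WalkProfile r n) : walkVec r (n + 1) (n + 1) = frontVec r (n + 1) := by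
  rw [walkVec_succ_succ, walkVec_eq_zero_of_lt (by omega), Matrix.mulVec_zero, zero_add,
    h.front, Qmat_mulVec_frontVec]

lemma Pmat_mulVec_walkVec (hr : 0 < r) (h : WalkProfile r n) {m : ℕ} (hm : m + 1 ≤ n)
    (hpar : (m + 1) % 2 = n % 2) :
    (Pmat r (m + 1)).mulVec (walkVec r n (m + 1)) = vec2 (amp r m) 0 := by
  rcases hm.eq_or_lt with rfl | hlt
  · rw [h.front, Pmat_mulVec_frontVec]
  · rw [h.behind _ hlt hpar, Pmat_mulVec_stationaryVec hr]

lemma behind_succ (hr : 0 < r) (h : WalkProfile r n) (j : ℕ) (hj : j < n + 1)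
    (hpar : j % 2 = (n + 1) % 2) : walkVec r (n + 1) j = stationaryVec r j := by
  cases j with
  | zero => rw [walkVec_succ_zero, h.Pmat_mulVec_walkVec hr (by omega) (by omega), stationaryVec]
  | succ k =>
    rw [walkVec_succ_succ, h.Pmat_mulVec_walkVec hr (by omega) (by omega),
      h.behind k (by omega) (by omega), Qmat_mulVec_stationaryVec hr, vec2_add, stationaryVec,
      add_zero, zero_add]

lemma succ (hr : 0 < r) (h : WalkProfile r n) : WalkProfile r (n + 1) where
  parity := h.parity_succ
  front := h.front_succ
  behind := h.behind_succ hr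

end WalkProfile

lemma walkProfile (hr : 0 < r) (n : ℕ) : WalkProfile r n := by
  induction n with
  | zero => exact .zero
  | succ n ih => exact ih.succ hr

lemma mu_succ_self (hr : 0 < r) (n : ℕ) : mu r (n + 1) (n + 1) = rhoProd r n ^ 2 := by
  rw [mu_eq_of_walkVec_eq ((walkProfile hr (n + 1)).front), zero_pow two_ne_zero, zero_add]

lemma mu_succ_le (hr : 0 < r) {n k : ℕ} (hk : k + 1 < n) :
    mu r n (k + 1) ≤ amp r (k + 1) ^ 2 + amp r k ^ 2 := by
  by_cases hpar : (k + 1) % 2 = n % 2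
  · exact (mu_eq_of_walkVec_eq ((walkProfile hr n).behind _ hk hpar)).le
  · rw [mu_eq_of_walkVec_eq (((walkProfile hr n).parity _ hpar).trans vec2_zero.symm)]
    linarith [sq_nonneg (amp r (k + 1)), sq_nonneg (amp r k)]

end

/-- Degenerate bottom localization for the second-kind walk:
`lim_{n→∞} μ_n(n) = r/(r+1)` and `lim_{n→∞} μ_n(n−j) = 0` for every fixed `j ≥ 1`. -/
theorem bottom_localization_second_kind (r : ℝ) (hr : 1 < r) :
    Tendsto (fun n : ℕ => mu r n n) atTop (nhds (r / (r + 1))) ∧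
    ∀ j : ℕ, 1 ≤ j → Tendsto (fun n : ℕ => mu r n (n - j)) atTop (nhds 0) := by
  have hr0 : 0 < r := by linarith
  refine ⟨?_, fun j hj => ?_⟩
  · rw [← tendsto_add_atTop_iff_nat 1]
    simpa only [mu_succ_self hr0] using tendsto_rhoProd_sq hr0
  · have hbehind := tendsto_amp_sq hr0 |>.comp (tendsto_sub_atTop_nat (j + 1))
    have hbound := ((tendsto_amp_sq hr0).comp (tendsto_add_atTop_nat 1)).comp
      (tendsto_sub_atTop_nat (j + 1)) |>.add hbehind
    rw [add_zero] at hbound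
    refine squeeze_zero' (.of_forall fun n => mu_nonneg n _) ?_ hbound
    filter_upwards [eventually_ge_atTop (j + 1)] with n hn
    rw [show n - j = n - (j + 1) + 1 by omega]
    exact mu_succ_le hr0 (by omega)
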